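/- arXiv:2401.08274 — 3 statements merged into one kernel-verified Lean document; each statement's English description precedes it below -/
import Mathlib

section
/- The set of blocks {{0, 25, 37, 55, 76, 99}, {0, 52, 57, 72, 110, 113}, {0, 54, 71, 81, 90, 97}, {0, 73, 75, 79, 107, 108}} forms a (121, 6, 1) difference family over Z/121Z: every nonzero element of Z/121Z arises exactly once as a difference b - b' of two distinct elements b, b' of some block. -/
open Finset

/-- The multiset of differences of distinct elements of a block. -/
def diffs {v : ℕ} (B : Finset (ZMod v)) : Multiset (ZMod v) :=
  ((B ×ˢ B).filter fun p => p.1 ≠ p.2).val.map fun p => p.1 - p.2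

/-- A (v, k, 1) difference family over ZMod v with t blocks. -/
def IsDiffFamily {v : ℕ} (t k : ℕ) (B : Fin t → Finset (ZMod v)) : Prop :=
  (∀ i, (B i).card = k) ∧
    ∀ x : ZMod v, x ≠ 0 → Multiset.count x (∑ i, diffs (B i)) = 1

set_option maxRecDepth 100000 in
theorem stmt_0 :
    IsDiffFamily (v := 121) 4 6
      ![({0, 25, 37, 55, 76, 99} : Finset (ZMod 121)),
        {0, 52, 57, 72, 110, 113},
        {0, 54, 71, 81, 90, 97},
        {0, 73, 75, 79, 107, 108}] := by
  constructor
  · decide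
  · decide
end

section
/- The set of blocks {{0, 1, 3, 11, 48, 65, 83}, {0, 4, 13, 29, 43, 81, 141}, {0, 5, 12, 36, 56, 78, 111}, {0, 6, 21, 40, 67, 90, 116}} forms a (169, 7, 1) difference family over Z/169Z. -/
open Finset

set_option maxRecDepth 40000 in
theorem stmt_2 :
    IsDiffFamily (v := 169) 4 7
      ![({0, 1, 3, 11, 48, 65, 83} : Finset (ZMod 169)),
        {0, 4, 13, 29, 43, 81, 141},
        {0, 5, 12, 36, 56, 78, 111},
        {0, 6, 21, 40, 67, 90, 116}] := by
  unfold IsDiffFamily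
  exact ⟨by decide, by decide⟩
end

section
/- The blocks {{0, 1, 3, 11, 48, 65, 83}, {0, 4, 13, 29, 43, 81, 141}, {0, 5, 63, 96, 118, 138, 162}, {0, 6, 21, 40, 67, 90, 116}} form a (169, 7, 1) difference family over Z/169Z that admits a nontrivial multiplier: there exists a unit u ≠ 1 in Z/169Z of multiplicative order 3 such that multiplication by u maps each block to a translate of some block of the family. -/
open Finset

set_option maxRecDepth 100000 in
theorem stmt_10 :
    IsDiffFamily (v := 169) 4 7
      ![({0, 1, 3, 11, 48, 65, 83} : Finset (ZMod 169)),
        {0, 4, 13, 29, 43, 81, 141},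
        {0, 5, 63, 96, 118, 138, 162},
        {0, 6, 21, 40, 67, 90, 116}] ∧
    ∃ u : (ZMod 169)ˣ, u ≠ 1 ∧ orderOf u = 3 ∧
      ∀ i : Fin 4, ∃ (j : Fin 4) (g : ZMod 169),
        (![({0, 1, 3, 11, 48, 65, 83} : Finset (ZMod 169)),
            {0, 4, 13, 29, 43, 81, 141},
            {0, 5, 63, 96, 118, 138, 162},
            {0, 6, 21, 40, 67, 90, 116}] i).image (fun b => (u : ZMod 169) * b) =
          (![({0, 1, 3, 11, 48, 65, 83} : Finset (ZMod 169)),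
              {0, 4, 13, 29, 43, 81, 141},
              {0, 5, 63, 96, 118, 138, 162},
              {0, 6, 21, 40, 67, 90, 116}] j).image (fun b => b + g) := by
  refine ⟨⟨?_, ?_⟩, ⟨22, 146, by decide, by decide⟩, ?_, ?_, ?_⟩
  · decide
  · decide
  · decide
  · exact orderOf_eq_prime (by ext; decide) (by decide)
  · intro i
    fin_cases i
    · exact ⟨2, 73, by decide⟩
    · exact ⟨1, 88, by decide⟩
    · exact ⟨3, 163, by decide⟩
    · exact ⟨0, 121, by decide⟩
end
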